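/- arXiv:2411.19183 — 2 statements merged into one kernel-verified Lean document; each statement's English description precedes it below -/
import Mathlib

section
/- Let P ⊆ [0,1] × ℝ be a denominator 2 polygon with no lattice points on its boundary (b(P) = 0) such that 2P has at least one interior lattice point. Then 2P has exactly 4 boundary lattice points. -/
open Set Pointwise

def latt : Set (ℝ × ℝ) := {p | ∃ m n : ℤ, p = ((m : ℝ), (n : ℝ))}
noncomputable def bcount (Q : Set (ℝ × ℝ)) : ℕ := (frontier Q ∩ latt).ncard
noncomputable def icount (Q : Set (ℝ × ℝ)) : ℕ := (interior Q ∩ latt).ncard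
def IsDen2 (P : Set (ℝ × ℝ)) : Prop :=
  (∃ V : Finset (ℝ × ℝ), (∀ v ∈ V, (2 : ℝ) • v ∈ latt) ∧
    P = convexHull ℝ (V : Set (ℝ × ℝ))) ∧ (interior P).Nonempty

/-!
Write `Q = 2P`: the convex hull of finitely many lattice points in the strip `[0, 2] × ℝ`, and a
boundary lattice point of `P` is a boundary point of `Q` with both coordinates even. Every lattice
point of `Q` lies on one of the lines `x = 0, 1, 2`, and the interior lattice point lies on `x = 1`,
so `Q` has vertices on both `x = 0` and `x = 2`. Every point of `Q` on `x = 0` or `x = 2` is a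
boundary point, so the lattice points there have odd height; the slice of `Q` being an interval,
it contains exactly one of them. On `x = 1` the slice is an interval `[c, d]` around the interior
point, and its boundary points are `(1, c)` and `(1, d)`. The top `d` is attained at a vertex on
`x = 1` or at the midpoint of vertices on `x = 0` and `x = 2`; as these have odd heights, `d` is
an integer, and so is `c` by reflecting in the `x`-axis.
-/

open Filter

lemma IsCompact.finite_inter_latt {K : Set (ℝ × ℝ)} (hK : IsCompact K) : (K ∩ latt).Finite := by
  have hcast : Tendsto (Prod.map ((↑) : ℤ → ℝ) ((↑) : ℤ → ℝ)) cofinite (cocompact (ℝ × ℝ)) := by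
    simpa only [coprod_cofinite, coprod_cocompact] using
      Int.tendsto_coe_cofinite.prodMap_coprod Int.tendsto_coe_cofinite
  refine ((tendsto_cofinite_cocompact_iff.1 hcast K hK).image (Prod.map (↑) (↑))).subset ?_
  rintro _ ⟨hp, m, n, rfl⟩
  exact ⟨(m, n), hp, rfl⟩

lemma frontier_smul₀ {G₀ α : Type*} [GroupWithZero G₀] [MulAction G₀ α] [TopologicalSpace α]
    [ContinuousConstSMul G₀ α] {c : G₀} (hc : c ≠ 0) (s : Set α) :
    frontier (c • s) = c • frontier s :=
  ((Homeomorph.smulOfNeZero c hc).image_frontier s).symm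

lemma Set.OrdConnected.eq_of_forall_odd {S : Set ℝ} (hS : S.OrdConnected)
    (hodd : ∀ k : ℤ, (k : ℝ) ∈ S → Odd k) {m n : ℤ} (hm : (m : ℝ) ∈ S) (hn : (n : ℝ) ∈ S) :
    m = n := by
  wlog hmn : m < n generalizing m n
  · rcases (not_lt.1 hmn).eq_or_lt with h | h
    · exact h.symm
    · exact (this hn hm h).symm
  have hsucc : ((m + 1 : ℤ) : ℝ) ∈ S :=
    hS.out hm hn ⟨by push_cast; linarith, by exact_mod_cast hmn⟩
  exact absurd (odd_add_one.1 (hodd _ hsucc)) (Int.not_even_iff_odd.2 (hodd m hm))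

lemma Convex.preimage_prodMk {E F : Type*} [AddCommGroup E] [Module ℝ E] [AddCommGroup F]
    [Module ℝ F] {s : Set (E × F)} (hs : Convex ℝ s) (x : E) : Convex ℝ (Prod.mk x ⁻¹' s) := by
  intro y hy z hz a b ha hb hab
  convert hs hy hz ha hb hab using 1
  simp [← add_smul, hab]

lemma int_eq_zero_or_one_or_two {i : ℤ} (h : (i : ℝ) ∈ Icc 0 2) : i = 0 ∨ i = 1 ∨ i = 2 := by
  have h0 : 0 ≤ i := by exact_mod_cast h.1
  have h2 : i ≤ 2 := by exact_mod_cast h.2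
  omega

section Strip

variable {Q : Set (ℝ × ℝ)}

lemma fst_mem_Ioo_of_mem_interior {a b : ℝ} (hQ : Q ⊆ Icc a b ×ˢ univ) {p : ℝ × ℝ}
    (hp : p ∈ interior Q) : p.1 ∈ Ioo a b := by
  have := interior_mono hQ hp
  rw [interior_prod_eq, interior_Icc] at this
  exact this.1

lemma mem_frontier_of_fst_eq {a b : ℝ} (hQc : IsClosed Q) (hQ : Q ⊆ Icc a b ×ˢ univ) {p : ℝ × ℝ}
    (hp : p ∈ Q) (h : p.1 = a ∨ p.1 = b) : p ∈ frontier Q := by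
  rw [hQc.frontier_eq]
  refine ⟨hp, fun hint => ?_⟩
  have := fst_mem_Ioo_of_mem_interior hQ hint
  rcases h with h | h <;> simp [h] at this

lemma exists_mem_interior_fst_eq_one (hstrip : Q ⊆ Icc 0 2 ×ˢ univ)
    (hint : (interior Q ∩ latt).Nonempty) :
    ∃ m : ℤ, ((1 : ℝ), (m : ℝ)) ∈ interior Q := by
  obtain ⟨_, hz, k, m, rfl⟩ := hint
  obtain ⟨h0, h2⟩ : (0 : ℝ) < k ∧ (k : ℝ) < 2 := fst_mem_Ioo_of_mem_interior hstrip hz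
  obtain rfl : k = 1 := by
    have : (0 : ℤ) < k := by exact_mod_cast h0
    have : k < 2 := by exact_mod_cast h2
    omega
  exact ⟨m, by simpa using hz⟩

lemma exists_snd_eq_two_mul_add_one (hQc : IsClosed Q) (hstrip : Q ⊆ Icc 0 2 ×ˢ univ)
    (heven : ∀ p ∈ latt, (2 : ℝ) • p ∉ frontier Q) {p : ℝ × ℝ} (hpQ : p ∈ Q) (hp : p ∈ latt)
    (hp1 : p.1 ≠ 1) : ∃ k : ℤ, p.2 = 2 * k + 1 := by
  obtain ⟨i, n, rfl⟩ := hp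
  have hi : i = 0 ∨ i = 2 := by
    rcases int_eq_zero_or_one_or_two (hstrip hpQ).1 with h | h | h
    exacts [Or.inl h, absurd (by simp [h]) hp1, Or.inr h]
  have hfr := mem_frontier_of_fst_eq hQc hstrip hpQ (by rcases hi with rfl | rfl <;> simp)
  obtain ⟨j, rfl⟩ : Even i := by rcases hi with rfl | rfl <;> decide
  obtain ⟨k, rfl | rfl⟩ := Int.even_or_odd' n
  · refine absurd ?_ (heven _ ⟨j, k, rfl⟩)
    convert hfr using 1
    ext <;> simp [two_mul]
  · exact ⟨k, by push_cast; rfl⟩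

lemma mem_frontier_iff_of_fst_eq_zero_or_two (hQ : Convex ℝ Q) (hQc : IsClosed Q)
    (hstrip : Q ⊆ Icc 0 2 ×ˢ univ) (heven : ∀ p ∈ latt, (2 : ℝ) • p ∉ frontier Q) {x : ℝ}
    (hx : x = 0 ∨ x = 2) {a : ℤ} (ha : (x, (a : ℝ)) ∈ Q) (n : ℤ) :
    (x, (n : ℝ)) ∈ frontier Q ↔ n = a := by
  refine ⟨fun hn => ?_, fun h => h ▸ mem_frontier_of_fst_eq hQc hstrip ha hx⟩
  refine (hQ.preimage_prodMk x).ordConnected.eq_of_forall_odd (fun k hk => ?_)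
    (hQc.frontier_subset hn) ha
  obtain ⟨l, hl⟩ := exists_snd_eq_two_mul_add_one hQc hstrip heven hk
    (by rcases hx with rfl | rfl; exacts [⟨0, k, by simp⟩, ⟨2, k, by simp⟩])
    (by rcases hx with rfl | rfl <;> norm_num)
  exact ⟨l, Int.cast_injective (α := ℝ) (by push_cast; exact hl)⟩

end Strip

section ConvexHull

variable {W : Set (ℝ × ℝ)}

lemma exists_fst_lt_of_mem_interior_convexHull {p : ℝ × ℝ}
    (hp : p ∈ interior (convexHull ℝ W)) : ∃ w ∈ W, w.1 < p.1 := by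
  by_contra! h
  have hsub : convexHull ℝ W ⊆ Prod.fst ⁻¹' Ici p.1 :=
    convexHull_min h ((convex_Ici _).is_linear_preimage (LinearMap.fst ℝ ℝ ℝ).isLinear)
  have := interior_mono hsub hp
  rw [← isOpenMap_fst.preimage_interior_eq_interior_preimage continuous_fst, interior_Ici] at this
  exact lt_irrefl p.1 this

lemma exists_lt_fst_of_mem_interior_convexHull {p : ℝ × ℝ}
    (hp : p ∈ interior (convexHull ℝ W)) : ∃ w ∈ W, p.1 < w.1 := by
  by_contra! h
  have hsub : convexHull ℝ W ⊆ Prod.fst ⁻¹' Iic p.1 :=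
    convexHull_min h ((convex_Iic _).is_linear_preimage (LinearMap.fst ℝ ℝ ℝ).isLinear)
  have := interior_mono hsub hp
  rw [← isOpenMap_fst.preimage_interior_eq_interior_preimage continuous_fst, interior_Iic] at this
  exact lt_irrefl p.1 this

lemma snd_le_of_mem_convexHull {α β : ℝ} (h : ∀ p ∈ W, p.2 ≤ α * p.1 + β) {q : ℝ × ℝ}
    (hq : q ∈ convexHull ℝ W) : q.2 ≤ α * q.1 + β := by
  have hconv : Convex ℝ {p : ℝ × ℝ | p.2 - α * p.1 ≤ β} :=
    convex_halfSpace_le (LinearMap.snd ℝ ℝ ℝ - α • LinearMap.fst ℝ ℝ ℝ).isLinear β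
  have hW : W ⊆ {p : ℝ × ℝ | p.2 - α * p.1 ≤ β} := fun p hp =>
    show p.2 - α * p.1 ≤ β by linarith [h p hp]
  have : q.2 - α * q.1 ≤ β := convexHull_min hW hconv hq
  linarith

end ConvexHull

section ColumnOne

variable {W : Set (ℝ × ℝ)}

lemma snd_le_of_mem_convexHull_of_fst_eq_one (hfst : ∀ p ∈ W, p.1 = 0 ∨ p.1 = 1 ∨ p.1 = 2)
    {a b M : ℝ} (ha : ∀ p ∈ W, p.1 = 0 → p.2 ≤ a) (hb : ∀ p ∈ W, p.1 = 2 → p.2 ≤ b)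
    (hM : ∀ p ∈ W, p.1 = 1 → p.2 ≤ M) (hab : a + b ≤ 2 * M) {y : ℝ}
    (hy : ((1 : ℝ), y) ∈ convexHull ℝ W) : y ≤ M := by
  -- The line of slope `(b - a) / 2` through `(1, M)` passes above `(0, a)` and `(2, b)`
  -- because `a + b ≤ 2 * M`.
  have hline : ∀ p ∈ W, p.2 ≤ (b - a) / 2 * p.1 + (M - (b - a) / 2) := by
    intro p hp
    rcases hfst p hp with h | h | h <;> rw [h]
    · linarith [ha p hp h]
    · linarith [hM p hp h]
    · linarith [hb p hp h]
  have := snd_le_of_mem_convexHull hline hy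
  simp only [mul_one] at this
  linarith

lemma exists_int_isGreatest_column_one (hW : W.Finite) (hWl : W ⊆ latt)
    (hfst : ∀ p ∈ W, p.1 = 0 ∨ p.1 = 1 ∨ p.1 = 2)
    (hodd : ∀ p ∈ W, p.1 ≠ 1 → ∃ k : ℤ, p.2 = 2 * k + 1)
    (h0 : ∃ p ∈ W, p.1 = 0) (h2 : ∃ p ∈ W, p.1 = 2) :
    ∃ n : ℤ, IsGreatest (Prod.mk 1 ⁻¹' convexHull ℝ W) n := by
  obtain ⟨p, ⟨hpW, hp0⟩, hpmax⟩ :=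
    exists_max_image {p ∈ W | p.1 = 0} Prod.snd (hW.sep _) h0
  obtain ⟨q, ⟨hqW, hq2⟩, hqmax⟩ :=
    exists_max_image {p ∈ W | p.1 = 2} Prod.snd (hW.sep _) h2
  set r : ℝ × ℝ := midpoint ℝ p q
  have hr : r = (1, (p.2 + q.2) / 2) := by
    ext <;> simp [r, midpoint_eq_smul_add, hp0, hq2]
    ring
  obtain ⟨s, hsT, hsmax⟩ := exists_max_image (insert r {p ∈ W | p.1 = 1}) Prod.snd
    ((hW.sep _).insert r) (insert_nonempty _ _)
  have hs : s.1 = 1 ∧ s ∈ convexHull ℝ W ∧ ∃ n : ℤ, s.2 = n := by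
    rcases hsT with rfl | ⟨hsW, hs1⟩
    · obtain ⟨k, hk⟩ := hodd p hpW (by norm_num [hp0])
      obtain ⟨l, hl⟩ := hodd q hqW (by norm_num [hq2])
      refine ⟨by simp [hr], (convex_convexHull ℝ W).midpoint_mem (subset_convexHull ℝ W hpW)
        (subset_convexHull ℝ W hqW), k + l + 1, ?_⟩
      rw [hr, hk, hl]
      push_cast
      ring
    · obtain ⟨m, n, rfl⟩ := hWl hsW
      exact ⟨hs1, subset_convexHull ℝ W hsW, n, rfl⟩
  obtain ⟨hs1, hsW, n, hn⟩ := hs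
  refine ⟨n, ?_, fun y hy => ?_⟩
  · rwa [← hn, ← hs1]
  · have hrs := hsmax r (mem_insert _ _)
    rw [hr] at hrs
    rw [← hn]
    exact snd_le_of_mem_convexHull_of_fst_eq_one hfst (fun w hw hw0 => hpmax w ⟨hw, hw0⟩)
      (fun w hw hw2 => hqmax w ⟨hw, hw2⟩) (fun w hw hw1 => hsmax w (mem_insert_of_mem _ ⟨hw, hw1⟩))
      (by dsimp only at hrs; linarith) hy

lemma exists_int_isLeast_column_one (hW : W.Finite) (hWl : W ⊆ latt)
    (hfst : ∀ p ∈ W, p.1 = 0 ∨ p.1 = 1 ∨ p.1 = 2)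
    (hodd : ∀ p ∈ W, p.1 ≠ 1 → ∃ k : ℤ, p.2 = 2 * k + 1)
    (h0 : ∃ p ∈ W, p.1 = 0) (h2 : ∃ p ∈ W, p.1 = 2) :
    ∃ n : ℤ, IsLeast (Prod.mk 1 ⁻¹' convexHull ℝ W) n := by
  let σ : ℝ × ℝ →ₗ[ℝ] ℝ × ℝ := LinearMap.prodMap LinearMap.id (-LinearMap.id)
  have hσ : ∀ p, σ p = (p.1, -p.2) := fun p => rfl
  have hσσ : Function.Involutive σ := fun p => by simp [hσ]
  obtain ⟨n, hn, hnmax⟩ := exists_int_isGreatest_column_one (hW.image σ)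
    (forall_mem_image.2 fun p hp => by obtain ⟨m, n, rfl⟩ := hWl hp; exact ⟨m, -n, by simp [hσ]⟩)
    (forall_mem_image.2 hfst)
    (forall_mem_image.2 fun p hp h => by
      obtain ⟨k, hk⟩ := hodd p hp h
      exact ⟨-k - 1, by simp [hσ, hk]; ring⟩)
    (exists_mem_image.2 h0) (exists_mem_image.2 h2)
  rw [← LinearMap.image_convexHull, hσσ.image_eq_preimage_symm] at hn hnmax
  refine ⟨-n, ?_, fun y hy => ?_⟩
  · simpa [hσ] using hn
  · have := hnmax (show σ (1, -y) ∈ convexHull ℝ W by simpa [hσ] using hy)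
    push_cast
    linarith

end ColumnOne

lemma mem_frontier_iff_of_isLeast_of_isGreatest {Q : Set (ℝ × ℝ)} (hQ : Convex ℝ Q)
    (hQc : IsClosed Q) {x m c d : ℝ} (hm : (x, m) ∈ interior Q)
    (hc : IsLeast (Prod.mk x ⁻¹' Q) c) (hd : IsGreatest (Prod.mk x ⁻¹' Q) d) {y : ℝ} :
    (x, y) ∈ frontier Q ↔ y = c ∨ y = d := by
  have hint : ∀ {y}, (x, y) ∈ interior Q → y ∈ interior (Prod.mk x ⁻¹' Q) := fun h =>
    preimage_interior_subset_interior_preimage (Continuous.prodMk_right x) h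
  rw [hQc.frontier_eq]
  constructor
  · rintro ⟨hyQ, hyint⟩
    by_contra! hne
    have hcy : c < y := (hc.2 hyQ).lt_of_ne hne.1.symm
    have hyd : y < d := (hd.2 hyQ).lt_of_ne hne.2
    refine hyint ?_
    rcases lt_trichotomy y m with h | rfl | h
    · refine hQ.openSegment_self_interior_subset_interior hc.1 hm ?_
      rw [← Prod.image_mk_openSegment_right, openSegment_eq_Ioo (hcy.trans h)]
      exact mem_image_of_mem _ ⟨hcy, h⟩
    · exact hm
    · refine hQ.openSegment_interior_self_subset_interior hm hd.1 ?_
      rw [← Prod.image_mk_openSegment_right, openSegment_eq_Ioo (h.trans hyd)]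
      exact mem_image_of_mem _ ⟨h, hyd⟩
  · rintro (rfl | rfl)
    · refine ⟨hc.1, fun h => ?_⟩
      have : y ∈ interior (Ici y) := interior_mono (fun z hz => hc.2 hz) (hint h)
      rw [interior_Ici] at this
      exact lt_irrefl y this
    · refine ⟨hd.1, fun h => ?_⟩
      have : y ∈ interior (Iic y) := interior_mono (fun z hz => hd.2 hz) (hint h)
      rw [interior_Iic] at this
      exact lt_irrefl y this

lemma exists_frontier_inter_latt_columns {W : Set (ℝ × ℝ)} (hW : W.Finite) (hWl : W ⊆ latt)
    (hstrip : convexHull ℝ W ⊆ Icc 0 2 ×ˢ univ)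
    (heven : ∀ p ∈ latt, (2 : ℝ) • p ∉ frontier (convexHull ℝ W))
    (hint : (interior (convexHull ℝ W) ∩ latt).Nonempty) :
    ∃ a b c d : ℤ, c < d ∧
      (∀ n : ℤ, ((0 : ℝ), (n : ℝ)) ∈ frontier (convexHull ℝ W) ↔ n = a) ∧
      (∀ n : ℤ, ((2 : ℝ), (n : ℝ)) ∈ frontier (convexHull ℝ W) ↔ n = b) ∧
      (∀ n : ℤ, ((1 : ℝ), (n : ℝ)) ∈ frontier (convexHull ℝ W) ↔ n = c ∨ n = d) := by
  set Q := convexHull ℝ W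
  have hQ : Convex ℝ Q := convex_convexHull ℝ W
  have hQc : IsClosed Q := (hW.isCompact_convexHull ℝ).isClosed
  have hWQ : W ⊆ Q := subset_convexHull ℝ W
  have hfst : ∀ p ∈ W, p.1 = 0 ∨ p.1 = 1 ∨ p.1 = 2 := fun p hp => by
    obtain ⟨i, n, rfl⟩ := hWl hp
    rcases int_eq_zero_or_one_or_two (hstrip (hWQ hp)).1 with rfl | rfl | rfl <;> simp
  have hodd : ∀ p ∈ W, p.1 ≠ 1 → ∃ k : ℤ, p.2 = 2 * k + 1 := fun p hp =>
    exists_snd_eq_two_mul_add_one hQc hstrip heven (hWQ hp) (hWl hp)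
  obtain ⟨m, hm⟩ := exists_mem_interior_fst_eq_one hstrip hint
  obtain ⟨p, hpW, hp1⟩ := exists_fst_lt_of_mem_interior_convexHull hm
  obtain ⟨q, hqW, hq1⟩ := exists_lt_fst_of_mem_interior_convexHull hm
  have hp0 : p.1 = 0 := by
    have : p.1 < 1 := hp1
    rcases hfst p hpW with h | h | h <;> linarith
  have hq2 : q.1 = 2 := by
    have : 1 < q.1 := hq1
    rcases hfst q hqW with h | h | h <;> linarith
  obtain ⟨c, hc⟩ := exists_int_isLeast_column_one hW hWl hfst hodd ⟨p, hpW, hp0⟩ ⟨q, hqW, hq2⟩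
  obtain ⟨d, hd⟩ := exists_int_isGreatest_column_one hW hWl hfst hodd ⟨p, hpW, hp0⟩ ⟨q, hqW, hq2⟩
  have hfr1 : ∀ y : ℝ, ((1 : ℝ), y) ∈ frontier Q ↔ y = c ∨ y = d := fun y =>
    mem_frontier_iff_of_isLeast_of_isGreatest hQ hQc hm hc hd
  have hcd : (c : ℝ) < d := by
    have hmd : (m : ℝ) ≠ d := fun h =>
      disjoint_interior_frontier.notMem_of_mem_left hm ((hfr1 m).2 (Or.inr h))
    have hmQ : ((1 : ℝ), (m : ℝ)) ∈ Q := interior_subset hm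
    exact (hc.2 hmQ).trans_lt ((hd.2 hmQ).lt_of_ne hmd)
  obtain ⟨i, a, rfl⟩ := hWl hpW
  obtain ⟨j, b, rfl⟩ := hWl hqW
  rw [show (i : ℝ) = 0 from hp0] at hpW
  rw [show (j : ℝ) = 2 from hq2] at hqW
  exact ⟨a, b, c, d, by exact_mod_cast hcd,
    mem_frontier_iff_of_fst_eq_zero_or_two hQ hQc hstrip heven (Or.inl rfl) (hWQ hpW),
    mem_frontier_iff_of_fst_eq_zero_or_two hQ hQc hstrip heven (Or.inr rfl) (hWQ hqW),
    fun n => (hfr1 n).trans (by norm_cast)⟩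

lemma ncard_frontier_inter_latt_eq_four {Q : Set (ℝ × ℝ)} (hQc : IsClosed Q)
    (hstrip : Q ⊆ Icc 0 2 ×ˢ univ) {a b c d : ℤ} (hcd : c < d)
    (h0 : ∀ n : ℤ, ((0 : ℝ), (n : ℝ)) ∈ frontier Q ↔ n = a)
    (h2 : ∀ n : ℤ, ((2 : ℝ), (n : ℝ)) ∈ frontier Q ↔ n = b)
    (h1 : ∀ n : ℤ, ((1 : ℝ), (n : ℝ)) ∈ frontier Q ↔ n = c ∨ n = d) :
    (frontier Q ∩ latt).ncard = 4 := by
  have hset : frontier Q ∩ latt =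
      {((0 : ℝ), (a : ℝ)), ((2 : ℝ), (b : ℝ)), ((1 : ℝ), (c : ℝ)), ((1 : ℝ), (d : ℝ))} := by
    ext p
    constructor
    · rintro ⟨hp, i, n, rfl⟩
      rcases int_eq_zero_or_one_or_two (hstrip (hQc.frontier_subset hp)).1 with rfl | rfl | rfl
      · simp [(h0 n).1 (by simpa using hp)]
      · rcases (h1 n).1 (by simpa using hp) with rfl | rfl <;> simp
      · simp [(h2 n).1 (by simpa using hp)]
    · rintro (rfl | rfl | rfl | rfl)
      · exact ⟨(h0 a).2 rfl, 0, a, by simp⟩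
      · exact ⟨(h2 b).2 rfl, 2, b, by simp⟩
      · exact ⟨(h1 c).2 (Or.inl rfl), 1, c, by simp⟩
      · exact ⟨(h1 d).2 (Or.inr rfl), 1, d, by simp⟩
  have hcd' : (c : ℝ) ≠ d := by exact_mod_cast hcd.ne
  rw [hset, ncard_insert_of_notMem, ncard_insert_of_notMem, ncard_pair] <;> simp [hcd']

lemma two_smul_notMem_frontier_two_smul {P : Set (ℝ × ℝ)} (hPc : IsCompact P)
    (hb : bcount P = 0) {p : ℝ × ℝ} (hp : p ∈ latt) : (2 : ℝ) • p ∉ frontier ((2 : ℝ) • P) := by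
  have hfin := (hPc.of_isClosed_subset isClosed_frontier
    (frontier_subset_closure.trans hPc.isClosed.closure_subset)).finite_inter_latt
  rw [frontier_smul₀ two_ne_zero, smul_mem_smul_set_iff₀ two_ne_zero]
  exact fun h => ((ncard_eq_zero hfin).1 hb).subset ⟨h, hp⟩

/-- a denominator 2 polygon contained in the strip `[0,1] × ℝ` with no
boundary lattice points, whose double has an interior lattice point, has exactly 4
boundary lattice points in its double. -/
theorem stmt_9 (P : Set (ℝ × ℝ)) (hP : IsDen2 P)
    (hsub : P ⊆ Set.Icc (0 : ℝ) 1 ×ˢ (Set.univ : Set ℝ))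
    (hb : bcount P = 0)
    (hi : (interior ((2 : ℝ) • P) ∩ latt).Nonempty) :
    bcount ((2 : ℝ) • P) = 4 := by
  obtain ⟨⟨V, hV, rfl⟩, -⟩ := hP
  set W : Set (ℝ × ℝ) := (2 : ℝ) • (V : Set (ℝ × ℝ))
  have hQ : (2 : ℝ) • convexHull ℝ (V : Set (ℝ × ℝ)) = convexHull ℝ W := (convexHull_smul _ _).symm
  have hW : W.Finite := V.finite_toSet.smul_set
  have hstrip : convexHull ℝ W ⊆ Icc 0 2 ×ˢ univ := by
    rw [← hQ]
    rintro _ ⟨p, hp, rfl⟩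
    obtain ⟨h0, h1⟩ := (hsub hp).1
    exact ⟨⟨by simp; linarith, by simp; linarith⟩, trivial⟩
  obtain ⟨a, b, c, d, hcd, h0, h2, h1⟩ := exists_frontier_inter_latt_columns hW
    (by rintro _ ⟨v, hv, rfl⟩; exact hV v hv) hstrip
    (fun p hp => hQ ▸
      two_smul_notMem_frontier_two_smul (V.finite_toSet.isCompact_convexHull ℝ) hb hp)
    (hQ ▸ hi)
  rw [bcount, hQ]
  exact ncard_frontier_inter_latt_eq_four (hW.isCompact_convexHull ℝ).isClosed hstrip hcd h0 h2 h1
end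

section
/- For every integer b₁ ≥ 0 and every integer b₂ ≥ max(3, 2b₁), there exists a denominator 2 polygon P contained (up to affine unimodular equivalence) in the strip [0,1] × ℝ with b(P) = b₁, i(P) = 0, b(2P) = b₂ and i(2P) = 0. Explicitly, conv((0,1/2),(1/2,0),(1/2,(b₂−2)/2)) works for b₁ = 0 and conv((0,0),(0,b₁−1),(1/2,0),(1/2,(b₂−2b₁)/2)) works for b₁ ≥ 1. -/
open Set Pointwise

/-!
Both polygons and their doubles are trapezoids `conv((0,a),(0,b),(w,c),(w,d))` with vertical
edges on the lines `x = 0` and `x = w`, where `w = 1/2` or `w = 1`. Inside the strip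
`0 ≤ x ≤ 1` no lattice point is interior, so every lattice point of such a polygon lies on one of
its vertical edges, and the edge over `[a, b]` carries `⌊b⌋ + 1 - ⌈a⌉` of them.
-/

theorem affineSpan_eq_top_of_det_ne_zero {A B C : ℝ × ℝ}
    (h : (B.1 - A.1) * (C.2 - A.2) - (B.2 - A.2) * (C.1 - A.1) ≠ 0) :
    affineSpan ℝ {A, B, C} = ⊤ := by
  set u := B -ᵥ A
  set v := C -ᵥ A
  have hspan : Submodule.span ℝ {u, v} = ⊤ := by
    refine eq_top_iff.2 fun p _ => Submodule.mem_span_pair.2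
      ⟨(p.1 * v.2 - p.2 * v.1) / (u.1 * v.2 - u.2 * v.1),
       (u.1 * p.2 - u.2 * p.1) / (u.1 * v.2 - u.2 * v.1), ?_⟩
    replace h : u.1 * v.2 - u.2 * v.1 ≠ 0 := h
    ext <;> simp only [Prod.smul_fst, Prod.smul_snd, Prod.fst_add, Prod.snd_add, smul_eq_mul]
    · linear_combination p.1 * mul_inv_cancel₀ h
    · linear_combination p.2 * mul_inv_cancel₀ h
  rw [AffineSubspace.affineSpan_eq_top_iff_vectorSpan_eq_top_of_nontrivial, eq_top_iff, ← hspan,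
    Submodule.span_le]
  rintro _ (rfl | rfl) <;> exact vsub_mem_vectorSpan ℝ (by simp) (by simp)

def trapezoid (w a b c d : ℝ) : Set (ℝ × ℝ) := convexHull ℝ {(0, a), (0, b), (w, c), (w, d)}

section Trapezoid

variable {w a b c d : ℝ}

theorem trapezoid_subset_Icc_prod_univ (hw : 0 ≤ w) :
    trapezoid w a b c d ⊆ Icc 0 w ×ˢ univ :=
  convexHull_min (by simp [insert_subset_iff, hw]) ((convex_Icc 0 w).prod convex_univ)

theorem trapezoid_subset_between_edges (hw : 0 ≤ w) (hab : a ≤ b) (hcd : c ≤ d) :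
    trapezoid w a b c d ⊆
      {p | a * w + (c - a) * p.1 ≤ w * p.2 ∧ w * p.2 ≤ b * w + (d - b) * p.1} := by
  refine convexHull_min ?_ ?_
  · simp only [insert_subset_iff, singleton_subset_iff, mem_ofPred]
    refine ⟨⟨?_, ?_⟩, ⟨?_, ?_⟩, ⟨?_, ?_⟩, ⟨?_, ?_⟩⟩ <;> nlinarith
  · rintro p ⟨hp1, hp2⟩ q ⟨hq1, hq2⟩ s t hs ht hst
    obtain rfl : t = 1 - s := by linarith
    simp only [mem_ofPred, Prod.fst_add, Prod.snd_add, Prod.smul_fst, Prod.smul_snd, smul_eq_mul]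
    constructor
    · nlinarith [mul_le_mul_of_nonneg_left hp1 hs, mul_le_mul_of_nonneg_left hq1 ht]
    · nlinarith [mul_le_mul_of_nonneg_left hp2 hs, mul_le_mul_of_nonneg_left hq2 ht]

theorem smul_trapezoid (r : ℝ) :
    r • trapezoid w a b c d = trapezoid (r * w) (r * a) (r * b) (r * c) (r * d) := by
  simp [trapezoid, ← convexHull_smul, smul_set_insert]

theorem isCompact_trapezoid : IsCompact (trapezoid w a b c d) :=
  (toFinite _).isCompact_convexHull ℝ

theorem interior_trapezoid_nonempty (hw : w ≠ 0) (h : a < b ∨ c < d) :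
    (interior (trapezoid w a b c d)).Nonempty := by
  rw [trapezoid, interior_convexHull_nonempty_iff_affineSpan_eq_top]
  rcases h with h | h
  · refine eq_top_mono (affineSpan_mono ℝ (s₁ := {(0, a), (0, b), (w, c)}) ?_)
      (affineSpan_eq_top_of_det_ne_zero ?_)
    · intro p; simp only [mem_insert_iff, mem_singleton_iff]; tauto
    · convert neg_ne_zero.2 (mul_ne_zero (sub_ne_zero.2 h.ne') hw) using 1
      ring
  · refine eq_top_mono (affineSpan_mono ℝ (s₁ := {(0, a), (w, c), (w, d)}) ?_)
      (affineSpan_eq_top_of_det_ne_zero ?_)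
    · intro p; simp only [mem_insert_iff, mem_singleton_iff]; tauto
    · convert mul_ne_zero hw (sub_ne_zero.2 h.ne') using 1
      ring

theorem mem_trapezoid_zero_iff (hw : 0 < w) (hab : a ≤ b) (hcd : c ≤ d) {y : ℝ} :
    ((0 : ℝ), y) ∈ trapezoid w a b c d ↔ y ∈ Icc a b := by
  refine ⟨fun hy => ?_, fun hy => ?_⟩
  · obtain ⟨h1, h2⟩ := trapezoid_subset_between_edges hw.le hab hcd hy
    constructor <;> nlinarith
  · have hseg : ((0 : ℝ), y) ∈ segment ℝ ((0 : ℝ), a) (0, b) := by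
      rw [← Prod.image_mk_segment_right, segment_eq_Icc (hy.1.trans hy.2)]
      exact mem_image_of_mem _ hy
    exact segment_subset_convexHull (by simp) (by simp) hseg

theorem mem_trapezoid_width_iff (hw : 0 < w) (hab : a ≤ b) (hcd : c ≤ d) {y : ℝ} :
    (w, y) ∈ trapezoid w a b c d ↔ y ∈ Icc c d := by
  refine ⟨fun hy => ?_, fun hy => ?_⟩
  · obtain ⟨h1, h2⟩ := trapezoid_subset_between_edges hw.le hab hcd hy
    constructor <;> nlinarith
  · have hseg : (w, y) ∈ segment ℝ (w, c) (w, d) := by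
      rw [← Prod.image_mk_segment_right, segment_eq_Icc (hy.1.trans hy.2)]
      exact mem_image_of_mem _ hy
    exact segment_subset_convexHull (by simp) (by simp) hseg

end Trapezoid

section LatticePoints

variable {Q : Set (ℝ × ℝ)}

theorem mem_latt_iff {p : ℝ × ℝ} :
    p ∈ latt ↔ p.1 ∈ range (Int.cast : ℤ → ℝ) ∧ p.2 ∈ range (Int.cast : ℤ → ℝ) := by
  constructor
  · rintro ⟨m, n, rfl⟩
    exact ⟨⟨m, rfl⟩, ⟨n, rfl⟩⟩
  · rintro ⟨⟨m, hm⟩, ⟨n, hn⟩⟩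
    exact ⟨m, n, Prod.ext hm.symm hn.symm⟩

theorem interior_inter_latt_eq_empty (hQ : Q ⊆ Icc 0 1 ×ˢ univ) : interior Q ∩ latt = ∅ := by
  have hint : interior Q ⊆ Ioo 0 1 ×ˢ univ := by
    simpa [interior_prod_eq] using interior_mono hQ
  refine eq_empty_of_forall_notMem ?_
  rintro _ ⟨hp, m, n, rfl⟩
  obtain ⟨⟨h0 : (0 : ℝ) < m, h1 : (m : ℝ) < 1⟩, -⟩ := hint hp
  have : (0 : ℤ) < m := by exact_mod_cast h0
  have : m < 1 := by exact_mod_cast h1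
  omega

theorem icount_eq_zero (hQ : Q ⊆ Icc 0 1 ×ˢ univ) : icount Q = 0 := by
  rw [icount, interior_inter_latt_eq_empty hQ, ncard_empty]

theorem bcount_eq_ncard_inter_latt (hc : IsClosed Q) (hQ : Q ⊆ Icc 0 1 ×ˢ univ) :
    bcount Q = (Q ∩ latt).ncard := by
  have h := interior_inter_latt_eq_empty hQ
  rw [bcount, hc.frontier_eq]
  congr 1
  ext p
  have : p ∈ interior Q → p ∉ latt := fun h1 h2 => h.subset ⟨h1, h2⟩
  simp only [mem_inter_iff, mem_sdiff]
  tauto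

theorem inter_latt_eq_of_subset (hQ : Q ⊆ Icc 0 1 ×ˢ univ) :
    Q ∩ latt = (fun n : ℤ => ((0 : ℝ), (n : ℝ))) '' {n | ((0 : ℝ), (n : ℝ)) ∈ Q} ∪
      (fun n : ℤ => ((1 : ℝ), (n : ℝ))) '' {n | ((1 : ℝ), (n : ℝ)) ∈ Q} := by
  ext p
  constructor
  · rintro ⟨hp, m, n, rfl⟩
    obtain ⟨⟨h0 : (0 : ℝ) ≤ m, h1 : (m : ℝ) ≤ 1⟩, -⟩ := hQ hp
    have : (0 : ℤ) ≤ m := by exact_mod_cast h0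
    have : m ≤ 1 := by exact_mod_cast h1
    obtain rfl | rfl : m = 0 ∨ m = 1 := by omega
    · exact Or.inl ⟨n, by simpa using hp, by simp⟩
    · exact Or.inr ⟨n, by simpa using hp, by simp⟩
  · rintro (⟨n, hn, rfl⟩ | ⟨n, hn, rfl⟩)
    · exact ⟨hn, 0, n, by simp⟩
    · exact ⟨hn, 1, n, by simp⟩

theorem ncard_inter_latt_eq_of_subset (hQ : Q ⊆ Icc 0 1 ×ˢ univ)
    (h0 : {n : ℤ | ((0 : ℝ), (n : ℝ)) ∈ Q}.Finite) (h1 : {n : ℤ | ((1 : ℝ), (n : ℝ)) ∈ Q}.Finite) :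
    (Q ∩ latt).ncard =
      {n : ℤ | ((0 : ℝ), (n : ℝ)) ∈ Q}.ncard + {n : ℤ | ((1 : ℝ), (n : ℝ)) ∈ Q}.ncard := by
  have hinj (x : ℝ) : Function.Injective fun n : ℤ => (x, (n : ℝ)) :=
    fun m n h => by simpa using h
  rw [inter_latt_eq_of_subset hQ, ncard_union_eq _ (h0.image _) (h1.image _),
    ncard_image_of_injective _ (hinj 0), ncard_image_of_injective _ (hinj 1)]
  refine disjoint_left.2 ?_
  rintro _ ⟨m, -, rfl⟩ ⟨n, -, h⟩
  simp at h

theorem setOf_intCast_mem_Icc (a b : ℝ) : {n : ℤ | (n : ℝ) ∈ Icc a b} = Icc ⌈a⌉ ⌊b⌋ := by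
  ext n
  simp [Int.ceil_le, Int.le_floor]

theorem ncard_setOf_intCast_mem_Icc (a b : ℝ) :
    {n : ℤ | (n : ℝ) ∈ Icc a b}.ncard = (⌊b⌋ + 1 - ⌈a⌉).toNat := by
  rw [setOf_intCast_mem_Icc, ← Int.card_Icc, ← Finset.coe_Icc, ncard_coe_finset]

end LatticePoints

section TrapezoidCounts

variable {w a b c d : ℝ}

theorem bcount_trapezoid_one (hab : a ≤ b) (hcd : c ≤ d) :
    bcount (trapezoid 1 a b c d) = (⌊b⌋ + 1 - ⌈a⌉).toNat + (⌊d⌋ + 1 - ⌈c⌉).toNat := by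
  have hQ := trapezoid_subset_Icc_prod_univ (a := a) (b := b) (c := c) (d := d) zero_le_one
  have h0 : {n : ℤ | ((0 : ℝ), (n : ℝ)) ∈ trapezoid 1 a b c d} = {n : ℤ | (n : ℝ) ∈ Icc a b} :=
    ext fun _ => mem_trapezoid_zero_iff one_pos hab hcd
  have h1 : {n : ℤ | ((1 : ℝ), (n : ℝ)) ∈ trapezoid 1 a b c d} = {n : ℤ | (n : ℝ) ∈ Icc c d} :=
    ext fun _ => mem_trapezoid_width_iff one_pos hab hcd
  rw [bcount_eq_ncard_inter_latt isCompact_trapezoid.isClosed hQ,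
    ncard_inter_latt_eq_of_subset hQ (by rw [h0, setOf_intCast_mem_Icc]; exact finite_Icc _ _)
      (by rw [h1, setOf_intCast_mem_Icc]; exact finite_Icc _ _),
    h0, h1, ncard_setOf_intCast_mem_Icc, ncard_setOf_intCast_mem_Icc]

theorem bcount_trapezoid_of_lt_one (hw : 0 < w) (hw1 : w < 1) (hab : a ≤ b) (hcd : c ≤ d) :
    bcount (trapezoid w a b c d) = (⌊b⌋ + 1 - ⌈a⌉).toNat := by
  have hQw := trapezoid_subset_Icc_prod_univ (a := a) (b := b) (c := c) (d := d) hw.le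
  have hQ : trapezoid w a b c d ⊆ Icc 0 1 ×ˢ univ :=
    hQw.trans (prod_mono (Icc_subset_Icc_right hw1.le) le_rfl)
  have h0 : {n : ℤ | ((0 : ℝ), (n : ℝ)) ∈ trapezoid w a b c d} = {n : ℤ | (n : ℝ) ∈ Icc a b} :=
    ext fun _ => mem_trapezoid_zero_iff hw hab hcd
  have h1 : {n : ℤ | ((1 : ℝ), (n : ℝ)) ∈ trapezoid w a b c d} = ∅ :=
    eq_empty_of_forall_notMem fun _ hn => hw1.not_ge (hQw hn).1.2
  rw [bcount_eq_ncard_inter_latt isCompact_trapezoid.isClosed hQ,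
    ncard_inter_latt_eq_of_subset hQ (by rw [h0, setOf_intCast_mem_Icc]; exact finite_Icc _ _)
      (by rw [h1]; exact finite_empty),
    h0, h1, ncard_setOf_intCast_mem_Icc, ncard_empty, add_zero]

theorem isDen2_trapezoid (hw : w ≠ 0) (h : a < b ∨ c < d)
    (hdouble : {2 * w, 2 * a, 2 * b, 2 * c, 2 * d} ⊆ range (Int.cast : ℤ → ℝ)) :
    IsDen2 (trapezoid w a b c d) := by
  classical
  refine ⟨⟨{(0, a), (0, b), (w, c), (w, d)}, ?_, by simp [trapezoid]⟩,
    interior_trapezoid_nonempty hw h⟩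
  simp only [insert_subset_iff, singleton_subset_iff] at hdouble
  simp only [Finset.mem_insert, Finset.mem_singleton]
  rintro v (rfl | rfl | rfl | rfl) <;> simp [mem_latt_iff, hdouble]

theorem trapezoid_half_counts {A B C D : ℤ} (hA : (A : ℝ) = 2 * a) (hB : (B : ℝ) = 2 * b)
    (hC : (C : ℝ) = 2 * c) (hD : (D : ℝ) = 2 * d) (hab : a ≤ b) (hcd : c ≤ d)
    (h : a < b ∨ c < d) :
    IsDen2 (trapezoid (1 / 2) a b c d) ∧ trapezoid (1 / 2) a b c d ⊆ Icc 0 1 ×ˢ univ ∧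
      bcount (trapezoid (1 / 2) a b c d) = (⌊b⌋ + 1 - ⌈a⌉).toNat ∧
      icount (trapezoid (1 / 2) a b c d) = 0 ∧
      bcount ((2 : ℝ) • trapezoid (1 / 2) a b c d) = (B + 1 - A).toNat + (D + 1 - C).toNat ∧
      icount ((2 : ℝ) • trapezoid (1 / 2) a b c d) = 0 := by
  have hQ : trapezoid (1 / 2) a b c d ⊆ Icc 0 1 ×ˢ univ :=
    (trapezoid_subset_Icc_prod_univ (by norm_num)).trans
      (prod_mono (Icc_subset_Icc_right (by norm_num)) le_rfl)
  have h2Q : (2 : ℝ) • trapezoid (1 / 2) a b c d = trapezoid 1 A B C D := by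
    rw [smul_trapezoid, hA, hB, hC, hD]
    norm_num
  have hdouble : {2 * (1 / 2), 2 * a, 2 * b, 2 * c, 2 * d} ⊆ range (Int.cast : ℤ → ℝ) := by
    simp only [insert_subset_iff, singleton_subset_iff]
    exact ⟨⟨1, by norm_num⟩, ⟨A, hA⟩, ⟨B, hB⟩, ⟨C, hC⟩, ⟨D, hD⟩⟩
  rw [h2Q]
  refine ⟨isDen2_trapezoid (by norm_num) h hdouble, hQ,
    bcount_trapezoid_of_lt_one (by norm_num) (by norm_num) hab hcd, icount_eq_zero hQ, ?_,
    icount_eq_zero (trapezoid_subset_Icc_prod_univ zero_le_one)⟩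
  rw [bcount_trapezoid_one (by rw [hA, hB]; linarith) (by rw [hC, hD]; linarith)]
  simp only [Int.floor_intCast, Int.ceil_intCast]

end TrapezoidCounts

/-- for all integers `b₁ ≥ 0` and `b₂ ≥ max(3, 2b₁)` there is a
denominator 2 polygon `P` contained in the strip `[0,1] × ℝ` with `b(P) = b₁`,
`i(P) = 0`, `b(2P) = b₂` and `i(2P) = 0`; explicitly one may take
`conv((0,1/2),(1/2,0),(1/2,(b₂−2)/2))` when `b₁ = 0` and
`conv((0,0),(0,b₁−1),(1/2,0),(1/2,(b₂−2b₁)/2))` when `b₁ ≥ 1`. -/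
theorem stmt_12 (b1 b2 : ℕ) (hb : max 3 (2 * b1) ≤ b2) :
    ∃ P : Set (ℝ × ℝ), IsDen2 P ∧
      P ⊆ Set.Icc (0 : ℝ) 1 ×ˢ (Set.univ : Set ℝ) ∧
      bcount P = b1 ∧ icount P = 0 ∧
      bcount ((2 : ℝ) • P) = b2 ∧ icount ((2 : ℝ) • P) = 0 ∧
      ((b1 = 0 ∧ P = convexHull ℝ
          {((0 : ℝ), 1 / 2), ((1 / 2 : ℝ), (0 : ℝ)), ((1 / 2 : ℝ), ((b2 : ℝ) - 2) / 2)}) ∨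
       (1 ≤ b1 ∧ P = convexHull ℝ
          {((0 : ℝ), (0 : ℝ)), ((0 : ℝ), (b1 : ℝ) - 1), ((1 / 2 : ℝ), (0 : ℝ)),
           ((1 / 2 : ℝ), ((b2 : ℝ) - 2 * (b1 : ℝ)) / 2)})) := by
  obtain ⟨hb2, hb12⟩ := max_le_iff.1 hb
  have hb2R : (3 : ℝ) ≤ b2 := by exact_mod_cast hb2
  rcases Nat.eq_zero_or_pos b1 with rfl | hb1
  · obtain ⟨hP, hstrip, hbP, hiP, hb2P, hi2P⟩ :=
      trapezoid_half_counts (a := 1 / 2) (b := 1 / 2) (c := 0) (d := (b2 - 2) / 2)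
        (A := 1) (B := 1) (C := 0) (D := b2 - 2) (by norm_num) (by norm_num) (by norm_num)
        (by push_cast; ring) le_rfl (by linarith) (Or.inr (by linarith))
    refine ⟨_, hP, hstrip, by rw [hbP]; norm_num, hiP, by rw [hb2P]; omega, hi2P,
      Or.inl ⟨rfl, by rw [trapezoid, insert_idem]⟩⟩
  · have hb1R : (1 : ℝ) ≤ b1 := by exact_mod_cast hb1
    have hb12R : 2 * (b1 : ℝ) ≤ b2 := by exact_mod_cast hb12
    obtain ⟨hP, hstrip, hbP, hiP, hb2P, hi2P⟩ :=
      trapezoid_half_counts (a := 0) (b := b1 - 1) (c := 0) (d := (b2 - 2 * b1) / 2)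
        (A := 0) (B := 2 * b1 - 2) (C := 0) (D := b2 - 2 * b1) (by norm_num)
        (by push_cast; ring) (by norm_num) (by push_cast; ring) (by linarith) (by linarith)
        (by by_contra! h; linarith [h.1, h.2])
    refine ⟨_, hP, hstrip, by rw [hbP]; simp, hiP, by rw [hb2P]; omega, hi2P,
      Or.inr ⟨hb1, rfl⟩⟩
end
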